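/- Define, for Y ∈ ℝ, V(Y) := 270·Y − 80·sin(Y) + 3·sin(2Y) − 686·sin(Y)/(3·cos²(Y/2) + 1/2) and ψ(Y) := 96·sin⁸(Y/2)/(cos²(Y/2) + 1/6) − sin(Y)·V(Y). Then ψ(0) = 0 and ψ(2π) = 0, ψ(Y) > 0 for all Y ∈ (0, 2π), the derivatives ψ^{(j)}(0) = 0 for all 0 ≤ j ≤ 7 with ψ^{(8)}(0) > 0, and ψ′(2π) = −540·π. -/

import Mathlib

/-!
Clearing denominators, `ψ(Y) (16 + 12 cos Y) = 9 M(Y)` with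
`M(Y) = 445 - 88 cos Y - 320 cos 2Y - 40 cos 3Y + 3 cos 4Y - 480 Y sin Y - 180 Y sin 2Y`.
The Taylor coefficients of `M` at `0` can be read off term by term: those below order `8` cancel
and `M⁽⁸⁾(0) = 8!`, and Leibniz's rule transfers this to `ψ`, since `16 + 12 cos 0 ≠ 0`.

Positivity of `M` on `(0, 2π)`: where `sin Y ≤ 0`, every term of `M`, written as a polynomial in
`Y`, `sin Y`, `cos Y`, is nonnegative. On `(0, π)` positivity reduces to
`Y < sin Y · P(cos Y) / (105 (1 + cos Y)³)` for a quintic `P`; the two sides agree at `0` and the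
derivative of the right-hand side exceeds `1` by `2 (1 - cos Y)⁴ / (35 (1 + cos Y))`.
-/

noncomputable section

open Real

/-- `V(Y) = 270Y - 80 sin Y + 3 sin(2Y) - 686 sin Y/(3cos²(Y/2) + 1/2)`. -/
def Vfun (Y : ℝ) : ℝ :=
  270 * Y - 80 * Real.sin Y + 3 * Real.sin (2 * Y) -
    686 * Real.sin Y / (3 * (Real.cos (Y / 2)) ^ 2 + 1 / 2)

/-- `ψ(Y) = 96 sin⁸(Y/2)/(cos²(Y/2) + 1/6) - sin(Y)·V(Y)`. -/
def psiFun (Y : ℝ) : ℝ :=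
  96 * (Real.sin (Y / 2)) ^ 8 / ((Real.cos (Y / 2)) ^ 2 + 1 / 6) - Real.sin Y * Vfun Y

section
variable {𝕜 : Type*} [NontriviallyNormedField 𝕜] {f g : 𝕜 → 𝕜} {x : 𝕜} {n : ℕ}

lemma iteratedDeriv_mul_eq_of_forall_lt (hf : ContDiffAt 𝕜 n f x) (hg : ContDiffAt 𝕜 n g x)
    (h : ∀ i < n, iteratedDeriv i f x = 0) :
    iteratedDeriv n (f * g) x = iteratedDeriv n f x * g x := by
  rw [iteratedDeriv_mul hf hg, Finset.sum_eq_single n]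
  · simp
  · intro i hi hin
    rw [h i (by simp at hi; omega), mul_zero, zero_mul]
  · simp

lemma iteratedDeriv_eq_zero_of_mul (hf : ContDiffAt 𝕜 n f x) (hg : ContDiffAt 𝕜 n g x)
    (hgx : g x ≠ 0) (h : ∀ i < n, iteratedDeriv i (f * g) x = 0) :
    ∀ i < n, iteratedDeriv i f x = 0 := by
  intro i
  induction i using Nat.strong_induction_on with
  | _ i ih =>
    intro hi
    have hle : (i : WithTop ℕ∞) ≤ n := by exact_mod_cast hi.le
    have := iteratedDeriv_mul_eq_of_forall_lt (hf.of_le hle) (hg.of_le hle)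
      fun j hj => ih j hj (hj.trans hi)
    rw [h i hi] at this
    exact (mul_eq_zero.1 this.symm).resolve_right hgx

lemma iteratedDeriv_id_mul_zero (hf : ContDiffAt 𝕜 n f 0) :
    iteratedDeriv n (fun x => x * f x) 0 = n * iteratedDeriv (n - 1) f 0 := by
  rw [iteratedDeriv_fun_mul (f := fun x => x) contDiffAt_id hf]
  rcases n with _ | n
  · simp
  · rw [Finset.sum_eq_single 1]
    · simp
    · intro i _ hi; simp [iteratedDeriv_fun_id_zero, hi]
    · simp

end

def psiNum (Y : ℝ) : ℝ :=
  445 - 88 * cos Y - 320 * cos (2 * Y) - 40 * cos (3 * Y) + 3 * cos (4 * Y)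
    - 480 * (Y * sin Y) - 180 * (Y * sin (2 * Y))

lemma psiNum_eq (Y : ℝ) :
    psiNum Y = 16 * (1 - cos Y) ^ 4 + sin Y ^ 2 * (752 + 96 * cos Y - 8 * cos Y ^ 2)
      - 120 * Y * sin Y * (4 + 3 * cos Y) := by
  have h4 : cos (4 * Y) = 2 * (2 * cos Y ^ 2 - 1) ^ 2 - 1 := by
    rw [show 4 * Y = 2 * (2 * Y) by ring, cos_two_mul, cos_two_mul]
  rw [psiNum, h4, cos_two_mul, cos_three_mul, sin_two_mul]
  linear_combination (8 * cos Y ^ 2 - 96 * cos Y - 752) * sin_sq_add_cos_sq Y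

lemma sixteen_add_twelve_mul_cos_pos (Y : ℝ) : 0 < 16 + 12 * cos Y := by
  linarith [neg_one_le_cos Y]

lemma psiFun_mul_eq (Y : ℝ) : psiFun Y * (16 + 12 * cos Y) = 9 * psiNum Y := by
  have hc : cos (Y / 2) ^ 2 = 1 / 2 + cos Y / 2 := by rw [cos_sq, mul_div_cancel₀ _ two_ne_zero]
  have hs : sin (Y / 2) ^ 8 = ((1 - cos Y) / 2) ^ 4 := by
    rw [show 8 = 2 * 4 by rfl, pow_mul, sin_sq, hc]; ring
  have hD : 4 + 3 * cos Y ≠ 0 := by linarith [neg_one_le_cos Y]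
  rw [psiFun, Vfun, hs, hc, psiNum_eq, sin_two_mul,
    show 1 / 2 + cos Y / 2 + 1 / 6 = (4 + 3 * cos Y) / 6 by ring,
    show 3 * (1 / 2 + cos Y / 2) + 1 / 2 = (4 + 3 * cos Y) / 2 by ring,
    show 16 + 12 * cos Y = 4 * (4 + 3 * cos Y) by ring]
  generalize hDdef : 4 + 3 * cos Y = D at hD ⊢
  field_simp
  subst hDdef
  ring

lemma psiFun_eq_div : psiFun = fun Y => 9 * psiNum Y / (16 + 12 * cos Y) :=
  funext fun Y => eq_div_of_mul_eq (sixteen_add_twelve_mul_cos_pos Y).ne' (psiFun_mul_eq Y)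

lemma contDiff_psiFun {n : WithTop ℕ∞} : ContDiff ℝ n psiFun := by
  rw [psiFun_eq_div]
  exact ContDiff.div (by unfold psiNum; fun_prop) (by fun_prop)
    fun Y => (sixteen_add_twelve_mul_cos_pos Y).ne'

def angleBound (Y : ℝ) : ℝ :=
  sin Y * (166 + 387 * cos Y + 263 * cos Y ^ 2 + 31 * cos Y ^ 3 - 9 * cos Y ^ 4 + 2 * cos Y ^ 5) /
    (105 * (1 + cos Y) ^ 3)

lemma hasDerivAt_angleBound {Y : ℝ} (hY : 1 + cos Y ≠ 0) :
    HasDerivAt angleBound (1 + 2 * (1 - cos Y) ^ 4 / (35 * (1 + cos Y))) Y := by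
  have hP := (((((hasDerivAt_const Y (166 : ℝ)).add ((hasDerivAt_cos Y).const_mul 387)).add
    (((hasDerivAt_cos Y).pow 2).const_mul 263)).add (((hasDerivAt_cos Y).pow 3).const_mul 31)).sub
    (((hasDerivAt_cos Y).pow 4).const_mul 9)).add (((hasDerivAt_cos Y).pow 5).const_mul 2)
  have hQ := (((hasDerivAt_cos Y).const_add 1).pow 3).const_mul (105 : ℝ)
  refine ((hasDerivAt_sin Y).mul hP |>.div hQ
    (mul_ne_zero (by norm_num) (pow_ne_zero 3 hY))).congr_deriv ?_
  simp only [Pi.add_apply, Pi.sub_apply, Pi.mul_apply, Pi.pow_apply]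
  field_simp
  linear_combination 35 * (111 + 470 * cos Y + 777 * cos Y ^ 2 + 624 * cos Y ^ 3 + 241 * cos Y ^ 4
    + 30 * cos Y ^ 5 - 9 * cos Y ^ 6 - 4 * cos Y ^ 7) * sin_sq_add_cos_sq Y

lemma neg_one_lt_cos_of_mem_Ico {Y : ℝ} (hY : Y ∈ Set.Ico 0 π) : -1 < cos Y := by
  simpa using cos_lt_cos_of_nonneg_of_le_pi hY.1 le_rfl hY.2

lemma strictMonoOn_angleBound_sub : StrictMonoOn (fun Y => angleBound Y - Y) (Set.Ico 0 π) := by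
  have hderiv {Y : ℝ} (hY : Y ∈ Set.Ico 0 π) :=
    (hasDerivAt_angleBound (by linarith [neg_one_lt_cos_of_mem_Ico hY])).fun_sub (hasDerivAt_id' Y)
  refine strictMonoOn_of_deriv_pos (convex_Ico 0 π)
    (fun Y hY => (hderiv hY).continuousAt.continuousWithinAt) fun Y hY => ?_
  rw [interior_Ico] at hY
  have hc1 : cos Y < 1 := by simpa using cos_lt_cos_of_nonneg_of_le_pi le_rfl hY.2.le hY.1
  have hc2 := neg_one_lt_cos_of_mem_Ico (Set.Ioo_subset_Ico_self hY)
  rw [(hderiv (Set.Ioo_subset_Ico_self hY)).deriv, add_sub_cancel_left]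
  exact div_pos (mul_pos two_pos (pow_pos (sub_pos.2 hc1) 4)) (by linarith)

lemma lt_angleBound {Y : ℝ} (h0 : 0 < Y) (hπ : Y < π) : Y < angleBound Y := by
  have := strictMonoOn_angleBound_sub ⟨le_rfl, pi_pos⟩ ⟨h0.le, hπ⟩ h0
  simpa [angleBound] using this

lemma psiNum_eq_angleBound {Y : ℝ} (hY : 1 + cos Y ≠ 0) :
    7 * psiNum Y =
      8 * (4 + 3 * cos Y) * (2 * (1 - cos Y) ^ 4 + 105 * sin Y * (angleBound Y - Y)) := by
  rw [psiNum_eq, angleBound]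
  field_simp
  linear_combination -48 * (1 - cos Y) ^ 4 * (1 + cos Y) ^ 2 * sin_sq_add_cos_sq Y

lemma psiNum_pos {Y : ℝ} (hY : Y ∈ Set.Ioo 0 (2 * π)) : 0 < psiNum Y := by
  obtain ⟨h0, h2π⟩ := hY
  have hc1 : cos Y < 1 := (cos_le_one Y).lt_of_ne fun h =>
    h0.ne' ((cos_eq_one_iff_of_lt_of_lt (by linarith [pi_pos]) h2π).1 h)
  have hc0 : 0 < (1 - cos Y) ^ 4 := pow_pos (sub_pos.2 hc1) 4
  rcases le_or_gt (sin Y) 0 with hs | hs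
  · have hq : 0 ≤ 752 + 96 * cos Y - 8 * cos Y ^ 2 := by nlinarith [neg_one_le_cos Y]
    have hl : 0 ≤ 4 + 3 * cos Y := by linarith [neg_one_le_cos Y]
    rw [psiNum_eq]
    nlinarith [mul_nonneg (sq_nonneg (sin Y)) hq,
      mul_nonneg (mul_nonneg h0.le (neg_nonneg.2 hs)) hl]
  · have hπ : Y < π := by
      by_contra! h
      linarith [sin_nonpos_of_nonpos_of_neg_pi_le (x := Y - 2 * π) (by linarith) (by linarith),
        sin_sub_two_pi Y]
    have hc := neg_one_lt_cos_of_mem_Ico ⟨h0.le, hπ⟩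
    have hid := psiNum_eq_angleBound (Y := Y) (by linarith)
    have hgap := mul_pos hs (sub_pos.2 (lt_angleBound h0 hπ))
    nlinarith

lemma iteratedDeriv_cos_const_mul_zero (k : ℝ) (n : ℕ) :
    iteratedDeriv n (fun x => cos (k * x)) 0 = k ^ n * iteratedDeriv n cos 0 := by
  simp [iteratedDeriv_comp_const_mul contDiff_cos]

lemma iteratedDeriv_id_mul_sin_const_mul_zero (k : ℝ) (n : ℕ) :
    iteratedDeriv n (fun x => x * sin (k * x)) 0 = -(n * k ^ (n - 1) * iteratedDeriv n cos 0) := by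
  rw [iteratedDeriv_id_mul_zero (by fun_prop)]
  rcases n with _ | n
  · simp
  · simp [iteratedDeriv_comp_const_mul contDiff_sin, mul_assoc]

lemma iteratedDeriv_psiNum_zero (n : ℕ) :
    iteratedDeriv n psiNum 0 = iteratedDeriv n cos 0 * (445 * 0 ^ n - 88 - 320 * 2 ^ n
      - 40 * 3 ^ n + 3 * 4 ^ n + 480 * n + 180 * n * 2 ^ (n - 1)) := by
  have h1 := iteratedDeriv_id_mul_sin_const_mul_zero 1 n
  simp only [one_mul, one_pow, mul_one] at h1
  unfold psiNum
  simp (disch := fun_prop) only [iteratedDeriv_fun_add, iteratedDeriv_fun_sub,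
    iteratedDeriv_const_mul_field, iteratedDeriv_const, iteratedDeriv_cos_const_mul_zero,
    iteratedDeriv_id_mul_sin_const_mul_zero, h1]
  rcases n with _ | n
  · simp
  · simp only [Nat.add_one_ne_zero, if_false, ne_eq, not_false_eq_true, zero_pow]
    ring

lemma iteratedDeriv_psiNum_zero_of_lt {n : ℕ} (hn : n < 8) : iteratedDeriv n psiNum 0 = 0 := by
  rw [iteratedDeriv_psiNum_zero]
  interval_cases n <;> norm_num

lemma iteratedDeriv_eight_psiNum_zero : iteratedDeriv 8 psiNum 0 = Nat.factorial 8 := by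
  rw [iteratedDeriv_psiNum_zero]
  norm_num [Nat.factorial]

lemma psiNum_two_pi : psiNum (2 * π) = 0 := by
  simp [psiNum_eq]

lemma deriv_psiNum_two_pi : deriv psiNum (2 * π) = -1680 * π := by
  have hsin (k : ℕ) : sin (k * (2 * π)) = 0 := by
    rw [← mul_assoc, ← Nat.cast_ofNat, ← Nat.cast_mul]; exact sin_nat_mul_pi _
  have h2 := hsin 2
  have h3 := hsin 3
  have h4 := hsin 4
  have hc2 := cos_nat_mul_two_pi 2
  push_cast at h2 h3 h4 hc2
  unfold psiNum
  simp (disch := fun_prop) only [deriv_fun_add, deriv_fun_sub, deriv_const', deriv_fun_mul,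
    deriv_id'', deriv_comp_mul_left, Real.deriv_cos', Real.deriv_sin, smul_eq_mul]
  simp [h2, h3, h4, hc2]
  ring

/-- `ψ` vanishes at `0` and `2π`, is positive on `(0, 2π)`, vanishes to order `8` at
the origin with positive eighth derivative, and `ψ′(2π) = -540π`. -/
theorem psiFun_properties :
    psiFun 0 = 0 ∧ psiFun (2 * π) = 0 ∧
    (∀ Y ∈ Set.Ioo (0 : ℝ) (2 * π), 0 < psiFun Y) ∧
    (∀ j : ℕ, j ≤ 7 → iteratedDeriv j psiFun 0 = 0) ∧
    0 < iteratedDeriv 8 psiFun 0 ∧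
    deriv psiFun (2 * π) = -540 * π := by
  have hprod : psiFun * (fun Y => 16 + 12 * cos Y) = fun Y => 9 * psiNum Y := funext psiFun_mul_eq
  have hψ : ContDiffAt ℝ 8 psiFun 0 := contDiff_psiFun.contDiffAt
  have hE : ContDiffAt ℝ 8 (fun Y => 16 + 12 * cos Y) 0 := by fun_prop
  have hvan : ∀ i < 8, iteratedDeriv i (psiFun * fun Y => 16 + 12 * cos Y) 0 = 0 := fun i hi => by
    rw [hprod, iteratedDeriv_const_mul_field, iteratedDeriv_psiNum_zero_of_lt hi, mul_zero]
  have hlow := iteratedDeriv_eq_zero_of_mul (n := 8) hψ hE (by norm_num) hvan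
  have h2π : psiFun (2 * π) = 0 := by simp [psiFun_eq_div, psiNum_two_pi]
  refine ⟨by simpa using hlow 0 (by norm_num), h2π, fun Y hY => ?_,
    fun j hj => hlow j (by omega), ?_, ?_⟩
  · rw [psiFun_eq_div]
    exact div_pos (mul_pos (by norm_num) (psiNum_pos hY)) (sixteen_add_twelve_mul_cos_pos Y)
  · have h8 := iteratedDeriv_mul_eq_of_forall_lt hψ hE hlow
    rw [hprod, iteratedDeriv_const_mul_field, iteratedDeriv_eight_psiNum_zero] at h8
    norm_num [Nat.factorial] at h8
    linarith
  · have hd := (contDiff_psiFun.differentiable one_ne_zero (2 * π)).hasDerivAt.mul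
      (((hasDerivAt_cos (2 * π)).const_mul 12).const_add 16)
    rw [hprod] at hd
    have hderiv := hd.deriv
    rw [deriv_const_mul_field, deriv_psiNum_two_pi, h2π] at hderiv
    simp only [cos_two_pi, sin_two_pi, neg_zero, mul_zero, add_zero] at hderiv
    linarith
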